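/- arXiv:1004.4399 — 4 statements merged into one kernel-verified Lean document; each statement's English description precedes it below -/
import Mathlib

section
/- Let ψ ∈ ℂ satisfy ψ⁴ ≠ 1. Then the deformed Fermat quartic f_ψ has no singular points away from the origin: for every z = (z₀,z₁,z₂,z₃) ∈ ℂ⁴ with z ≠ 0 and f_ψ(z) = 0, there exists an index i ∈ {0,1,2,3} such that the partial derivative ∂f_ψ/∂z_i evaluated at z is nonzero. (Hence the quartic K3 surface X_ψ ⊂ ℙ³ is smooth whenever ψ is not a fourth root of unity.) -/
open MvPolynomial

/-- The deformed Fermat quartic `z₀⁴ + z₁⁴ + z₂⁴ + z₃⁴ − 4ψ·z₀z₁z₂z₃`. -/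
noncomputable def fermatQuartic (ψ : ℂ) : MvPolynomial (Fin 4) ℂ :=
  X 0 ^ 4 + X 1 ^ 4 + X 2 ^ 4 + X 3 ^ 4 - C (4 * ψ) * (X 0 * X 1 * X 2 * X 3)

/-- If `ψ⁴ ≠ 1`, the deformed Fermat quartic has no singular points away from the
origin: at every nonzero zero of `f_ψ` some partial derivative is nonzero. -/
theorem fermatQuartic_smooth (ψ : ℂ) (hψ : ψ ^ 4 ≠ 1) :
    ∀ z : Fin 4 → ℂ, z ≠ 0 → eval z (fermatQuartic ψ) = 0 →
      ∃ i : Fin 4, eval z (pderiv i (fermatQuartic ψ)) ≠ 0 := by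
  intro z hz hf
  by_contra h
  push_neg at h
  have h0 := h 0
  have h1 := h 1
  have h2 := h 2
  have h3 := h 3
  simp [fermatQuartic, pderiv_pow] at h0 h1 h2 h3
  set P := z 0 * z 1 * z 2 * z 3 with hP
  have e0 : z 0 ^ 4 = ψ * P := by linear_combination (z 0 / 4) * h0
  have e1 : z 1 ^ 4 = ψ * P := by linear_combination (z 1 / 4) * h1
  have e2 : z 2 ^ 4 = ψ * P := by linear_combination (z 2 / 4) * h2
  have e3 : z 3 ^ 4 = ψ * P := by linear_combination (z 3 / 4) * h3
  have key : (1 - ψ ^ 4) * P ^ 4 = 0 := by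
    have : P ^ 4 = (z 0 ^ 4) * (z 1 ^ 4) * (z 2 ^ 4) * (z 3 ^ 4) := by ring
    rw [e0, e1, e2, e3] at this
    linear_combination this
  have hP0 : P = 0 := by
    rcases mul_eq_zero.mp key with h' | h'
    · exact absurd (by linear_combination -h') hψ
    · exact pow_eq_zero_iff (by norm_num) |>.mp h'
  apply hz
  funext i
  have : ∀ j : Fin 4, z j = 0 := by
    intro j
    fin_cases j
    · exact pow_eq_zero_iff (n := 4) (by norm_num) |>.mp (show z 0 ^ 4 = 0 by rw [e0, hP0, mul_zero])
    · exact pow_eq_zero_iff (n := 4) (by norm_num) |>.mp (show z 1 ^ 4 = 0 by rw [e1, hP0, mul_zero])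
    · exact pow_eq_zero_iff (n := 4) (by norm_num) |>.mp (show z 2 ^ 4 = 0 by rw [e2, hP0, mul_zero])
    · exact pow_eq_zero_iff (n := 4) (by norm_num) |>.mp (show z 3 ^ 4 = 0 by rw [e3, hP0, mul_zero])
  exact this i
end

section
/- Let ψ ∈ ℂ satisfy ψ⁵ ≠ 1. Then the deformed Fermat quintic g_ψ has no singular points away from the origin: for every z = (z₀,…,z₄) ∈ ℂ⁵ with z ≠ 0 and g_ψ(z) = 0, there exists an index i ∈ {0,…,4} such that the partial derivative ∂g_ψ/∂z_i evaluated at z is nonzero. (Hence the quintic threefold X_ψ ⊂ ℙ⁴ is smooth whenever ψ is not a fifth root of unity.) -/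
open MvPolynomial

/-- The deformed Fermat quintic `z₀⁵ + z₁⁵ + z₂⁵ + z₃⁵ + z₄⁵ − 5ψ·z₀z₁z₂z₃z₄`. -/
noncomputable def fermatQuintic (ψ : ℂ) : MvPolynomial (Fin 5) ℂ :=
  X 0 ^ 5 + X 1 ^ 5 + X 2 ^ 5 + X 3 ^ 5 + X 4 ^ 5 -
    C (5 * ψ) * (X 0 * X 1 * X 2 * X 3 * X 4)

/-- If `ψ⁵ ≠ 1`, the deformed Fermat quintic has no singular points away from the
origin: at every nonzero zero of `g_ψ` some partial derivative is nonzero. -/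
theorem fermatQuintic_smooth (ψ : ℂ) (hψ : ψ ^ 5 ≠ 1) :
    ∀ z : Fin 5 → ℂ, z ≠ 0 → eval z (fermatQuintic ψ) = 0 →
      ∃ i : Fin 5, eval z (pderiv i (fermatQuintic ψ)) ≠ 0 := by
  intro z hz _
  by_contra hc
  push_neg at hc
  have h0 := hc 0; have h1 := hc 1; have h2 := hc 2; have h3 := hc 3; have h4 := hc 4
  simp [fermatQuintic, pderiv_X, pderiv_mul, pderiv_pow] at h0 h1 h2 h3 h4
  set P : ℂ := z 0 * z 1 * z 2 * z 3 * z 4 with hPdef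
  have e0 : z 0 ^ 5 = ψ * P := by rw [hPdef]; linear_combination (z 0 / 5) * h0
  have e1 : z 1 ^ 5 = ψ * P := by rw [hPdef]; linear_combination (z 1 / 5) * h1
  have e2 : z 2 ^ 5 = ψ * P := by rw [hPdef]; linear_combination (z 2 / 5) * h2
  have e3 : z 3 ^ 5 = ψ * P := by rw [hPdef]; linear_combination (z 3 / 5) * h3
  have e4 : z 4 ^ 5 = ψ * P := by rw [hPdef]; linear_combination (z 4 / 5) * h4
  by_cases hP : P = 0
  · apply hz
    funext i
    have : z i ^ 5 = 0 := by
      fin_cases i <;> simp [e0, e1, e2, e3, e4, hP]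
    simpa using pow_eq_zero_iff (n := 5) (by norm_num) |>.mp this
  · have hP5 : P ^ 5 = ψ ^ 5 * P ^ 5 := by
      calc P ^ 5 = z 0 ^ 5 * z 1 ^ 5 * z 2 ^ 5 * z 3 ^ 5 * z 4 ^ 5 := by
            rw [hPdef]; ring
        _ = ψ ^ 5 * P ^ 5 := by rw [e0, e1, e2, e3, e4]; ring
    have : (1 - ψ ^ 5) * P ^ 5 = 0 := by linear_combination hP5
    rcases mul_eq_zero.mp this with h | h
    · exact hψ (by linear_combination -h)
    · exact hP (pow_eq_zero_iff (by norm_num) |>.mp h)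
end

section
/- Equivariance of the T-operator under change of basis of sections: let (X, μ) be a measure space with 0 < μ(X) < ∞, let N ≥ 1, let s : X → ℂᴺ be measurable, let A be an N×N complex matrix, and let h be an N×N complex matrix such that s(x)ᴴ (Aᴴ h A) s(x) ≠ 0 for μ-almost every x and the entrywise integrability hypotheses hold for both sides. Then the T-operator computed with the transformed sections s'(x) := A·s(x) satisfies T_{A·s}(h) = A · T_s(Aᴴ h A) · Aᴴ. -/
open MeasureTheory Matrix

/-- The generalized T-operator: given sections `s : X → ℂᴺ` and a metric `h`,
`T_s(h) := (N/μ(X)) ∫_X s(x)s(x)ᴴ / (s(x)ᴴ h s(x)) dμ(x)`. -/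
noncomputable def Toperator {X : Type*} [MeasurableSpace X] (μ : Measure X) (N : ℕ)
    (s : X → Fin N → ℂ) (h : Matrix (Fin N) (Fin N) ℂ) : Matrix (Fin N) (Fin N) ℂ :=
  Matrix.of fun α β =>
    ((N : ℂ) / ((μ Set.univ).toReal : ℂ)) *
      ∫ x, s x α * (starRingEnd ℂ) (s x β) / (star (s x) ⬝ᵥ h.mulVec (s x)) ∂μ

/-- Equivariance of the T-operator under a change of basis of the sections:
with `s'(x) = A·s(x)` one has `T_{A·s}(h) = A · T_s(Aᴴ h A) · Aᴴ`. -/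
theorem Toperator_equivariance {X : Type*} [MeasurableSpace X] (μ : Measure X)
    (hμ0 : 0 < μ Set.univ) (hμfin : μ Set.univ < ⊤)
    (N : ℕ) (hN : 1 ≤ N) (s : X → Fin N → ℂ) (hs : Measurable s)
    (A h : Matrix (Fin N) (Fin N) ℂ)
    (hD : ∀ᵐ x ∂μ, star (s x) ⬝ᵥ (Aᴴ * h * A).mulVec (s x) ≠ 0)
    (hint : ∀ α β : Fin N, Integrable
      (fun x => s x α * (starRingEnd ℂ) (s x β) /
        (star (s x) ⬝ᵥ (Aᴴ * h * A).mulVec (s x))) μ)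
    (hint' : ∀ α β : Fin N, Integrable
      (fun x => A.mulVec (s x) α * (starRingEnd ℂ) (A.mulVec (s x) β) /
        (star (A.mulVec (s x)) ⬝ᵥ h.mulVec (A.mulVec (s x)))) μ) :
    Toperator μ N (fun x => A.mulVec (s x)) h =
      A * Toperator μ N s (Aᴴ * h * A) * Aᴴ := by
  have hden : ∀ x, star (A.mulVec (s x)) ⬝ᵥ h.mulVec (A.mulVec (s x))
      = star (s x) ⬝ᵥ (Aᴴ * h * A).mulVec (s x) := by
    intro x
    simp [star_mulVec, dotProduct_mulVec, vecMul_vecMul, Matrix.mul_assoc]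
  ext α β
  simp only [Toperator, Matrix.of_apply]
  have key : (∫ x, A.mulVec (s x) α * (starRingEnd ℂ) (A.mulVec (s x) β) /
      (star (A.mulVec (s x)) ⬝ᵥ h.mulVec (A.mulVec (s x))) ∂μ)
      = ∑ i, ∑ j, A α i * (starRingEnd ℂ) (A β j) *
        ∫ x, s x i * (starRingEnd ℂ) (s x j) /
          (star (s x) ⬝ᵥ (Aᴴ * h * A).mulVec (s x)) ∂μ := by
    have hfun : ∀ x, A.mulVec (s x) α * (starRingEnd ℂ) (A.mulVec (s x) β) /
        (star (A.mulVec (s x)) ⬝ᵥ h.mulVec (A.mulVec (s x)))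
        = ∑ i, ∑ j, A α i * (starRingEnd ℂ) (A β j) *
          (s x i * (starRingEnd ℂ) (s x j) /
            (star (s x) ⬝ᵥ (Aᴴ * h * A).mulVec (s x))) := by
      intro x
      rw [hden x]
      simp only [Matrix.mulVec, dotProduct, map_sum, _root_.map_mul,
        Finset.sum_mul, Finset.mul_sum, Finset.sum_div]
      rw [Finset.sum_comm]
      refine Finset.sum_congr rfl fun i _ => Finset.sum_congr rfl fun j _ => ?_
      ring
    rw [integral_congr_ae (Filter.Eventually.of_forall hfun)]
    rw [integral_finset_sum _ (fun i _ => integrable_finset_sum _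
      (fun j _ => (hint i j).const_mul _))]
    refine Finset.sum_congr rfl fun i _ => ?_
    rw [integral_finset_sum _ (fun j _ => (hint i j).const_mul _)]
    exact Finset.sum_congr rfl fun j _ => MeasureTheory.integral_const_mul _ _
  rw [key]
  simp only [Matrix.mul_apply, Matrix.conjTranspose_apply, Matrix.of_apply,
    Finset.mul_sum, Finset.sum_mul]
  rw [Finset.sum_comm]
  refine Finset.sum_congr rfl fun i _ => Finset.sum_congr rfl fun j _ => ?_
  simp only [div_eq_mul_inv, Complex.star_def]
  ring
end

section
/- A fixed point of the T-operator iteration can be moved to a balanced place: let (X, μ) be a measure space with 0 < μ(X) < ∞, let N ≥ 1, let s : X → ℂᴺ be measurable with s(x) ≠ 0 for μ-almost every x, and let h be an N×N positive-definite Hermitian complex matrix satisfying the fixed-point (balanced) condition T_s(h) = h⁻¹ (with the integrability hypotheses holding). Let h^{1/2} denote the unique positive-definite Hermitian square root of h. Then the orthonormalized sections s'(x) := h^{1/2}·s(x) satisfy T_{s'}(𝟙) = 𝟙, where 𝟙 is the N×N identity matrix; i.e., after the change of basis s ↦ h^{1/2}s, the metric becomes the unit matrix and the embedding is balanced. -/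
open MeasureTheory Matrix
open scoped ComplexOrder

/-- The square root of a positive semidefinite matrix, as defined in the older Mathlib
(`Matrix.PosSemidef.sqrt`, since removed from Mathlib). -/
noncomputable def Matrix.PosSemidef.sqrt {n : Type*} [Fintype n] [DecidableEq n] {𝕜 : Type*}
    [RCLike 𝕜] {A : Matrix n n 𝕜} (hA : A.PosSemidef) : Matrix n n 𝕜 :=
  hA.1.eigenvectorUnitary.1 * diagonal ((↑) ∘ (Real.sqrt ∘ hA.1.eigenvalues)) *
    (star hA.1.eigenvectorUnitary : Matrix n n 𝕜)

/-! Conjugating by `Q = h^{1/2}` is a change of basis: since `Qᴴ = Q` and `Q * Q = h`, the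
denominator of `T_{Qs}(1)` is `(Qs)ᴴ(Qs) = sᴴ h s`, so
`T_{Qs}(1) = Q T_s(h) Q = Q h⁻¹ Q = 1`. -/

open scoped MatrixOrder

namespace Matrix.PosSemidef

variable {n 𝕜 : Type*} [Fintype n] [DecidableEq n] [RCLike 𝕜] {A : Matrix n n 𝕜}

theorem sqrt_eq_cfcSqrt (hA : A.PosSemidef) : hA.sqrt = CFC.sqrt A := by
  rw [CFC.sqrt_eq_real_sqrt A hA.nonneg, cfcₙ_eq_cfc, hA.1.cfc_eq, IsHermitian.cfc,
    Unitary.conjStarAlgAut_apply]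
  rfl

theorem sqrt_conjTranspose (hA : A.PosSemidef) : hA.sqrtᴴ = hA.sqrt := by
  rw [sqrt_eq_cfcSqrt]
  exact (CFC.sqrt_nonneg A).posSemidef.isHermitian

theorem sqrt_mul_sqrt (hA : A.PosSemidef) : hA.sqrt * hA.sqrt = A := by
  rw [sqrt_eq_cfcSqrt]
  exact CFC.sqrt_mul_sqrt_self A hA.nonneg

end Matrix.PosSemidef

theorem Matrix.PosDef.sqrt_mul_inv_mul_sqrt {n 𝕜 : Type*} [Fintype n] [DecidableEq n]
    [RCLike 𝕜] {A : Matrix n n 𝕜} (hA : A.PosDef) :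
    hA.posSemidef.sqrt * A⁻¹ * hA.posSemidef.sqrt = 1 := by
  rw [PosSemidef.sqrt_eq_cfcSqrt]
  have hdet : IsUnit (CFC.sqrt A).det := (isUnit_iff_isUnit_det _).mp <|
    (CFC.isUnit_sqrt_iff A hA.posSemidef.nonneg).mpr hA.isUnit
  have hinv : A⁻¹ = (CFC.sqrt A)⁻¹ * (CFC.sqrt A)⁻¹ := by
    rw [← Matrix.mul_inv_rev, CFC.sqrt_mul_sqrt_self A hA.posSemidef.nonneg]
  rw [hinv, ← Matrix.mul_assoc, mul_nonsing_inv _ hdet, Matrix.one_mul, nonsing_inv_mul _ hdet]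

namespace Matrix

variable {l m n p α : Type*}

theorem star_mulVec_dotProduct_mulVec_mulVec [Fintype m] [Fintype n] [CommSemiring α]
    [StarRing α] (Q : Matrix m n α) (h : Matrix m m α) (v : n → α) :
    star (Q *ᵥ v) ⬝ᵥ h *ᵥ (Q *ᵥ v) = star v ⬝ᵥ (Qᴴ * h * Q) *ᵥ v := by
  rw [star_mulVec, ← dotProduct_mulVec, mulVec_mulVec, mulVec_mulVec, Matrix.mul_assoc]

theorem vecMulVec_mulVec_star [Fintype n] [CommSemiring α] [StarRing α] (Q : Matrix m n α)
    (v : n → α) :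
    vecMulVec (Q *ᵥ v) (star (Q *ᵥ v)) = Q * vecMulVec v (star v) * Qᴴ := by
  rw [mul_vecMulVec, vecMulVec_mul, star_mulVec]

theorem integral_mul_mul_apply [Fintype m] [Fintype n] {X 𝕜 : Type*} [RCLike 𝕜]
    [MeasurableSpace X] {μ : Measure X} {F : X → Matrix m n 𝕜}
    (hF : ∀ i j, Integrable (fun x => F x i j) μ)
    (A : Matrix l m 𝕜) (B : Matrix n p 𝕜) (i : l) (j : p) :
    ∫ x, (A * F x * B) i j ∂μ = (A * of (fun k k' => ∫ x, F x k k' ∂μ) * B) i j := by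
  simp only [mul_apply, of_apply, Finset.sum_mul]
  rw [integral_finsetSum _ fun k _ => integrable_finsetSum _ fun k' _ =>
    ((hF k' k).const_mul _).mul_const _]
  refine Finset.sum_congr rfl fun k _ => ?_
  rw [integral_finsetSum _ fun k' _ => ((hF k' k).const_mul _).mul_const _]
  refine Finset.sum_congr rfl fun k' _ => ?_
  rw [integral_mul_const, integral_const_mul]

end Matrix

theorem Toperator_mulVec {X : Type*} [MeasurableSpace X] {μ : Measure X} {N : ℕ}
    {s : X → Fin N → ℂ} (Q h : Matrix (Fin N) (Fin N) ℂ)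
    (hint : ∀ α β : Fin N, Integrable (fun x =>
      s x α * (starRingEnd ℂ) (s x β) / (star (s x) ⬝ᵥ (Qᴴ * h * Q) *ᵥ s x)) μ) :
    Toperator μ N (fun x => Q *ᵥ s x) h = Q * Toperator μ N s (Qᴴ * h * Q) * Qᴴ := by
  set F : X → Matrix (Fin N) (Fin N) ℂ := fun x =>
    (star (s x) ⬝ᵥ (Qᴴ * h * Q) *ᵥ s x)⁻¹ • vecMulVec (s x) (star (s x)) with hF
  have hFapply : ∀ x α β, F x α β =
      s x α * (starRingEnd ℂ) (s x β) / (star (s x) ⬝ᵥ (Qᴴ * h * Q) *ᵥ s x) := by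
    intro x α β
    simp only [hF, Matrix.smul_apply, vecMulVec_apply, smul_eq_mul, div_eq_inv_mul]
    rfl
  have hTF : Toperator μ N s (Qᴴ * h * Q) =
      ((N : ℂ) / (μ Set.univ).toReal) • of fun α β => ∫ x, F x α β ∂μ := by
    ext α β
    simp only [Toperator, hFapply, of_apply, Matrix.smul_apply, smul_eq_mul]
  ext α β
  rw [hTF, Matrix.mul_smul, Matrix.smul_mul, Matrix.smul_apply, smul_eq_mul,
    ← integral_mul_mul_apply (fun α β => by simpa only [hFapply] using hint α β)]
  simp only [Toperator, of_apply]
  congr 1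
  refine integral_congr_ae (Filter.Eventually.of_forall fun x => ?_)
  simp only [hF, Matrix.mul_smul, Matrix.smul_mul, Matrix.smul_apply, smul_eq_mul,
    ← star_mulVec_dotProduct_mulVec_mulVec, ← vecMulVec_mulVec_star, vecMulVec_apply,
    div_eq_inv_mul]
  rfl

theorem Toperator_balanced_general {X : Type*} [MeasurableSpace X] (μ : Measure X)
    (N : ℕ) (s : X → Fin N → ℂ)
    (h : Matrix (Fin N) (Fin N) ℂ) (hh : h.PosDef)
    (hint : ∀ α β : Fin N, Integrable
      (fun x => s x α * (starRingEnd ℂ) (s x β) / (star (s x) ⬝ᵥ h.mulVec (s x))) μ)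
    (hbal : Toperator μ N s h = h⁻¹) :
    Toperator μ N (fun x => (hh.posSemidef.sqrt).mulVec (s x))
      (1 : Matrix (Fin N) (Fin N) ℂ) = 1 := by
  set Q := hh.posSemidef.sqrt
  have hQ : Qᴴ * 1 * Q = h := by
    rw [Matrix.mul_one, hh.posSemidef.sqrt_conjTranspose, hh.posSemidef.sqrt_mul_sqrt]
  rw [Toperator_mulVec Q 1 (by rwa [hQ]), hQ, hbal, hh.posSemidef.sqrt_conjTranspose]
  exact hh.sqrt_mul_inv_mul_sqrt

/-- A fixed point of the T-operator iteration can be moved to a balanced place: if `h`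
is Hermitian positive definite and balanced, i.e. `T_s(h) = h⁻¹`, then the
orthonormalized sections `s'(x) = h^{1/2}·s(x)` (with `h^{1/2}` the unique
positive-semidefinite Hermitian square root of `h`) satisfy `T_{s'}(𝟙) = 𝟙`. -/
theorem Toperator_balanced {X : Type*} [MeasurableSpace X] (μ : Measure X)
    (hμ0 : 0 < μ Set.univ) (hμfin : μ Set.univ < ⊤)
    (N : ℕ) (hN : 1 ≤ N) (s : X → Fin N → ℂ) (hs : Measurable s)
    (hsne : ∀ᵐ x ∂μ, s x ≠ 0)
    (h : Matrix (Fin N) (Fin N) ℂ) (hh : h.PosDef)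
    (hint : ∀ α β : Fin N, Integrable
      (fun x => s x α * (starRingEnd ℂ) (s x β) / (star (s x) ⬝ᵥ h.mulVec (s x))) μ)
    (hbal : Toperator μ N s h = h⁻¹) :
    Toperator μ N (fun x => (hh.posSemidef.sqrt).mulVec (s x))
      (1 : Matrix (Fin N) (Fin N) ℂ) = 1 :=
  Toperator_balanced_general μ N s h hh hint hbal
end
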